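/- The deconcatenation coproduct Δ on A⟨X⟩ is a shuffle-algebra homomorphism: Δ(u ⧢ v) = Δ(u) ⧢ Δ(v) for all words u, v, where the shuffle acts componentwise on tensors. -/

import Mathlib

open Finsupp Finset Filter

/-- A word `w` seen as an element of the free module `A⟨X⟩` (coefficient 1). -/
noncomputable def delta (A : Type*) [CommRing A] {X : Type*} (w : List X) : List X →₀ A :=
  Finsupp.single w 1

/-- Left concatenation by a letter, as a linear map on `A⟨X⟩`. -/
noncomputable def lcons (A : Type*) [CommRing A] {X : Type*} (x : X) :
    (List X →₀ A) →ₗ[A] (List X →₀ A) :=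
  Finsupp.lmapDomain A A (List.cons x)

open TensorProduct in
/-- The deconcatenation coproduct `Δ : A⟨X⟩ → A⟨X⟩ ⊗ A⟨X⟩`, `Δw = Σ_(uv=w) u ⊗ v`. -/
noncomputable def deconcat (A : Type*) [CommRing A] {X : Type*} :
    (List X →₀ A) →ₗ[A] TensorProduct A (List X →₀ A) (List X →₀ A) :=
  Finsupp.linearCombination A (fun w : List X =>
    ∑ i ∈ Finset.range (w.length + 1), delta A (w.take i) ⊗ₜ[A] delta A (w.drop i))

/-!
Both `Δ(w₁ ⧢ w₂)` and `Δw₁ ⧢ Δw₂` satisfy the same recursion in `(w₁, w₂)`. For an empty word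
both reduce to `Δ` of the other word by the unit laws. For `a·u` and `b·v`, the identity
`Δ(a·f) = 1 ⊗ a·f + (a· ⊗ id)(Δ f)` turns the shuffle recursion `au ⧢ bv = a(u ⧢ bv) + b(au ⧢ v)`
into `Δ(au ⧢ bv) = 1 ⊗ (au ⧢ bv) + (a· ⊗ id)Δ(u ⧢ bv) + (b· ⊗ id)Δ(au ⧢ v)`, and splitting off
the terms with an empty left prefix shows that `Δ(au) ⧢ Δ(bv)` obeys the same identity.
-/

open TensorProduct

section

variable {A X : Type*} [CommRing A]

lemma lcons_delta (a : X) (w : List X) : lcons A a (delta A w) = delta A (a :: w) := by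
  simp [lcons, delta, Finsupp.mapDomain_single]

lemma deconcat_delta (w : List X) :
    deconcat A (delta A w) = ∑ i ∈ range (w.length + 1),
      delta A (w.take i) ⊗ₜ[A] delta A (w.drop i) := by
  simp [deconcat, delta, Finsupp.linearCombination_single]

lemma deconcat_lcons (a : X) (f : List X →₀ A) :
    deconcat A (lcons A a f)
      = delta A [] ⊗ₜ[A] lcons A a f + map (lcons A a) LinearMap.id (deconcat A f) := by
  have on_words : ∀ w : List X, deconcat A (lcons A a (delta A w))
      = delta A [] ⊗ₜ[A] lcons A a (delta A w)
        + map (lcons A a) LinearMap.id (deconcat A (delta A w)) := by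
    intro w
    rw [lcons_delta, deconcat_delta, deconcat_delta, List.length_cons, sum_range_succ', map_sum]
    simp [lcons_delta, add_comm]
  refine LinearMap.congr_fun (f := deconcat A ∘ₗ lcons A a)
    (g := mk A _ _ (delta A []) ∘ₗ lcons A a + map (lcons A a) LinearMap.id ∘ₗ deconcat A) ?_ f
  exact Finsupp.lhom_ext' fun w => LinearMap.ext_ring (on_words w)

variable (star : (List X →₀ A) →ₗ[A] (List X →₀ A) →ₗ[A] (List X →₀ A))

/-- `Δ w₁ ⧢ Δ w₂`, with `star` acting componentwise on tensors. -/
noncomputable def deconcatStar (w₁ w₂ : List X) : (List X →₀ A) ⊗[A] (List X →₀ A) :=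
  ∑ i ∈ range (w₁.length + 1), ∑ j ∈ range (w₂.length + 1),
    star (delta A (w₁.take i)) (delta A (w₂.take j))
      ⊗ₜ[A] star (delta A (w₁.drop i)) (delta A (w₂.drop j))

variable {star}

lemma deconcatStar_nil_left (hunitl : ∀ w : List X, star (delta A []) (delta A w) = delta A w)
    (w : List X) : deconcatStar star [] w = deconcat A (delta A w) := by
  simp [deconcatStar, deconcat_delta, hunitl]

lemma deconcatStar_nil_right (hunitr : ∀ w : List X, star (delta A w) (delta A []) = delta A w)
    (w : List X) : deconcatStar star w [] = deconcat A (delta A w) := by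
  simp [deconcatStar, deconcat_delta, hunitr]

lemma deconcatStar_cons_cons
    (hunitl : ∀ w : List X, star (delta A []) (delta A w) = delta A w)
    (hunitr : ∀ w : List X, star (delta A w) (delta A []) = delta A w)
    (hrec : ∀ (a b : X) (u v : List X),
      star (delta A (a :: u)) (delta A (b :: v)) =
        lcons A a (star (delta A u) (delta A (b :: v)))
          + lcons A b (star (delta A (a :: u)) (delta A v)))
    (a b : X) (u v : List X) :
    deconcatStar star (a :: u) (b :: v)
      = delta A [] ⊗ₜ[A] star (delta A (a :: u)) (delta A (b :: v))
        + map (lcons A a) LinearMap.id (deconcatStar star u (b :: v))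
        + map (lcons A b) LinearMap.id (deconcatStar star (a :: u) v) := by
  simp only [deconcatStar, map_add, map_sum, map_tmul, LinearMap.id_coe, id_eq, List.length_cons,
    sum_range_succ', List.take_succ_cons, List.drop_succ_cons, List.take_zero, List.drop_zero,
    hunitl, hunitr, hrec, lcons_delta, add_tmul, tmul_add, sum_add_distrib]
  -- after peeling off the `i = 0` and `j = 0` terms, `hrec` splits each remaining left factor
  -- into its `a`-part and its `b`-part, and the unit laws match the boundary terms
  ac_rfl

end

open TensorProduct in
/-- the deconcatenation coproduct is a shuffle-algebra homomorphism:
`Δ(u ⧢ v) = Δ(u) ⧢ Δ(v)` (shuffle acting componentwise on tensors). -/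
theorem stmt9 {A X : Type*} [CommRing A]
    (star : (List X →₀ A) →ₗ[A] (List X →₀ A) →ₗ[A] (List X →₀ A))
    (hunitl : ∀ w : List X, star (delta A []) (delta A w) = delta A w)
    (hunitr : ∀ w : List X, star (delta A w) (delta A []) = delta A w)
    (hrec : ∀ (a b : X) (u v : List X),
      star (delta A (a :: u)) (delta A (b :: v)) =
        lcons A a (star (delta A u) (delta A (b :: v)))
          + lcons A b (star (delta A (a :: u)) (delta A v))) :
    ∀ w₁ w₂ : List X,
      deconcat A (star (delta A w₁) (delta A w₂))
        = ∑ i ∈ Finset.range (w₁.length + 1), ∑ j ∈ Finset.range (w₂.length + 1),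
            star (delta A (w₁.take i)) (delta A (w₂.take j))
              ⊗ₜ[A] star (delta A (w₁.drop i)) (delta A (w₂.drop j)) := by
  intro w₁ w₂
  change _ = deconcatStar star w₁ w₂
  induction w₁ generalizing w₂ with
  | nil => rw [hunitl, deconcatStar_nil_left hunitl]
  | cons a u ih =>
    induction w₂ with
    | nil => rw [hunitr, deconcatStar_nil_right hunitr]
    | cons b v ih₂ =>
      rw [deconcatStar_cons_cons hunitl hunitr hrec, hrec, map_add, deconcat_lcons,
        deconcat_lcons, ih, ih₂, tmul_add]
      abel
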